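/- arXiv:1708.07211 — 3 statements merged into one kernel-verified Lean document; each statement's English description precedes it below -/
import Mathlib

section
/- Let p, p₁ be positive probability densities on (M, λ) with Hellinger integral C = ∫ √(p·p₁) dλ ∈ (0, 1), and set l = 2·arccos C. Define τ-density q(x) = (1/sin(l/2))·(√(p₁(x)·p(x)) − cos(l/2)·p(x)). Then ∫ q dλ = 0 and ∫ (q²/p) dλ = 1. -/
open MeasureTheory Real

/-!
Writing `s = sin (l/2)` and `c = cos (l/2) = C`, we have `q = (√(p₁ p) - c p) / s`, so
`∫ q = (C - c) / s = 0` and `q² / p = (p₁ - 2c √(p₁ p) + c² p) / s²`, whose integral is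
`(1 - 2cC + c²) / s² = (1 - C²) / (1 - C²) = 1`. All integrals exist because `p` and `p₁`
are squares of `L²` functions and `√(p₁ p) = √p₁ √p` is a product of two of them.
-/

namespace MeasureTheory

variable {α : Type*} [MeasurableSpace α] {μ : Measure α} {f g : α → ℝ}

theorem MemLp.integrable_of_sqrt (hf : ∀ x, 0 ≤ f x) (h : MemLp (fun x => √(f x)) 2 μ) :
    Integrable f μ := by
  simpa only [sq_sqrt (hf _)] using h.integrable_sq

theorem MemLp.integrable_sqrt_mul (hf : ∀ x, 0 ≤ f x)
    (hsf : MemLp (fun x => √(f x)) 2 μ) (hsg : MemLp (fun x => √(g x)) 2 μ) :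
    Integrable (fun x => √(f x * g x)) μ := by
  refine (hsf.integrable_mul hsg).congr (ae_of_all _ fun x => ?_)
  simp only [Pi.mul_apply, sqrt_mul (hf x)]

end MeasureTheory

theorem one_div_mul_sqrt_mul_sub_sq_div {a b c s : ℝ} (ha : 0 < a) (hb : 0 ≤ b) :
    ((1 / s) * (√(b * a) - c * a)) ^ 2 / a = (b - 2 * c * √(b * a) + c ^ 2 * a) / s ^ 2 := by
  have hsq : √(b * a) ^ 2 = b * a := sq_sqrt (mul_nonneg hb ha.le)
  rw [mul_pow, mul_div_assoc, div_pow, one_pow, div_mul_eq_mul_div, one_mul]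
  congr 1
  field_simp
  linear_combination hsq

theorem initial_velocity_unit_norm_general
    {M : Type*} [MeasurableSpace M] (lam : Measure M)
    (p p₁ : M → ℝ)
    (hp0 : ∀ x, 0 < p x) (hp₁0 : ∀ x, 0 < p₁ x)
    (hpint : ∫ x, p x ∂lam = 1) (hp₁int : ∫ x, p₁ x ∂lam = 1)
    (hL2p : MemLp (fun x => Real.sqrt (p x)) 2 lam)
    (hL2p₁ : MemLp (fun x => Real.sqrt (p₁ x)) 2 lam)
    (C : ℝ) (hC : C = ∫ x, Real.sqrt (p x * p₁ x) ∂lam)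
    (hC1 : C < 1)
    (l : ℝ) (hl : l = 2 * Real.arccos C)
    (q : M → ℝ)
    (hq : ∀ x, q x = (1 / Real.sin (l / 2)) *
      (Real.sqrt (p₁ x * p x) - Real.cos (l / 2) * p x)) :
    (∫ x, q x ∂lam = 0) ∧ (∫ x, (q x)^2 / p x ∂lam = 1) := by
  have hC0 : 0 ≤ C := hC ▸ integral_nonneg fun _ => sqrt_nonneg _
  have hl2 : l / 2 = arccos C := by rw [hl]; ring
  have hcos : cos (l / 2) = C := by rw [hl2, cos_arccos (by linarith) hC1.le]
  have hsin_sq : sin (l / 2) ^ 2 = 1 - C ^ 2 := by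
    rw [hl2, sin_arccos, sq_sqrt (by nlinarith)]
  have hC_sq_ne : 1 - C ^ 2 ≠ 0 := by nlinarith
  have hip := hL2p.integrable_of_sqrt fun x => (hp0 x).le
  have hip₁ := hL2p₁.integrable_of_sqrt fun x => (hp₁0 x).le
  have hh := hL2p₁.integrable_sqrt_mul (fun x => (hp₁0 x).le) hL2p
  have hhC : ∫ x, √(p₁ x * p x) ∂lam = C := by simp_rw [hC, mul_comm]
  constructor
  · simp_rw [hq, hcos]
    rw [integral_const_mul, integral_sub hh (hip.const_mul C), integral_const_mul, hhC, hpint]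
    simp
  · simp_rw [hq, hcos, one_div_mul_sqrt_mul_sub_sq_div (hp0 _) (hp₁0 _).le, hsin_sq]
    have hh' : Integrable (fun x => 2 * C * √(p₁ x * p x)) lam := hh.const_mul _
    have hip' : Integrable (fun x => C ^ 2 * p x) lam := hip.const_mul _
    rw [integral_div,
      integral_add (f := fun x => p₁ x - 2 * C * √(p₁ x * p x)) (hip₁.sub hh') hip',
      integral_sub hip₁ hh', integral_const_mul, integral_const_mul, hhC, hpint, hp₁int]
    field_simp
    ring

/-- the initial velocity density
`q = (1/sin(l/2))(√(p₁ p) − cos(l/2) p)` of the geodesic integrates to `0` and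
has unit Fisher norm: `∫ q²/p dλ = 1`. -/
theorem initial_velocity_unit_norm
    {M : Type*} [MeasurableSpace M] (lam : Measure M) [IsProbabilityMeasure lam]
    (p p₁ : M → ℝ) (hp : Measurable p) (hp₁ : Measurable p₁)
    (hp0 : ∀ x, 0 < p x) (hp₁0 : ∀ x, 0 < p₁ x)
    (hpint : ∫ x, p x ∂lam = 1) (hp₁int : ∫ x, p₁ x ∂lam = 1)
    (hL2p : MemLp (fun x => Real.sqrt (p x)) 2 lam)
    (hL2p₁ : MemLp (fun x => Real.sqrt (p₁ x)) 2 lam)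
    (C : ℝ) (hC : C = ∫ x, Real.sqrt (p x * p₁ x) ∂lam)
    (hC0 : 0 < C) (hC1 : C < 1)
    (l : ℝ) (hl : l = 2 * Real.arccos C)
    (q : M → ℝ)
    (hq : ∀ x, q x = (1 / Real.sin (l / 2)) *
      (Real.sqrt (p₁ x * p x) - Real.cos (l / 2) * p x)) :
    (∫ x, q x ∂lam = 0) ∧ (∫ x, (q x)^2 / p x ∂lam = 1) :=
  initial_velocity_unit_norm_general lam p p₁ hp0 hp₁0 hpint hp₁int hL2p hL2p₁ C hC hC1 l hl q hq
end

section
/- Let p, p₁ be positive probability densities on (M, λ) with C = ∫ √(p·p₁) dλ ∈ (0, 1) and l = 2·arccos C. Define for t ∈ [0, l] the function p_t(x) = ((sin((l−t)/2)·√p(x) + sin(t/2)·√p₁(x))/sin(l/2))². Then ∫ p_t dλ = 1 for every t ∈ [0, l], p_t is positive, p_0 = p, and p_l = p₁. -/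
open MeasureTheory Real

/-!
The functions `√p` and `√p₁` are unit vectors of `L²(λ)` at angle `θ = arccos C = l / 2`,
and `√p_t = (sin (θ - t/2) √p + sin (t/2) √p₁) / sin θ` is the arc of the unit circle of their
span joining them, so `∫ p_t = ‖√p_t‖² = 1` is the identity
`sin² (θ - s) + 2 sin (θ - s) sin s cos θ + sin² s = sin² θ`.
On `[0, l]` both coefficients are nonnegative and not both zero, which gives `p_t > 0`.
-/

theorem integral_add_mul_sq_of_memLp {α : Type*} [MeasurableSpace α] {μ : Measure α}
    {f g : α → ℝ} (hf : MemLp f 2 μ) (hg : MemLp g 2 μ) (a b : ℝ) :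
    ∫ x, (a * f x + b * g x) ^ 2 ∂μ =
      a ^ 2 * ∫ x, f x ^ 2 ∂μ + 2 * a * b * ∫ x, f x * g x ∂μ + b ^ 2 * ∫ x, g x ^ 2 ∂μ := by
  have hff : Integrable (fun x => a ^ 2 * f x ^ 2) μ := hf.integrable_sq.const_mul _
  have hfg : Integrable (fun x => 2 * a * b * (f x * g x)) μ :=
    (hf.integrable_mul hg).const_mul _
  have hgg : Integrable (fun x => b ^ 2 * g x ^ 2) μ := hg.integrable_sq.const_mul _
  calc ∫ x, (a * f x + b * g x) ^ 2 ∂μ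
      = ∫ x, a ^ 2 * f x ^ 2 + 2 * a * b * (f x * g x) + b ^ 2 * g x ^ 2 ∂μ := by
        congr with x; ring
    _ = _ := by
        rw [integral_add (by exact hff.add hfg) hgg, integral_add hff hfg, integral_const_mul,
          integral_const_mul, integral_const_mul]

theorem sin_sq_add_two_mul_sin_mul_sin_mul_cos_add_add_sin_sq (x y : ℝ) :
    sin x ^ 2 + 2 * sin x * sin y * cos (x + y) + sin y ^ 2 = sin (x + y) ^ 2 := by
  rw [sin_add, cos_add]
  linear_combination -sin x ^ 2 * sin_sq_add_cos_sq y - sin y ^ 2 * sin_sq_add_cos_sq x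

theorem sin_sub_mul_add_sin_mul_pos {θ s a b : ℝ} (hθ₀ : 0 < θ) (hθ : θ < π) (hs₀ : 0 ≤ s)
    (hsθ : s ≤ θ) (ha : 0 < a) (hb : 0 < b) : 0 < sin (θ - s) * a + sin s * b := by
  have h₁ : 0 ≤ sin (θ - s) := sin_nonneg_of_nonneg_of_le_pi (by linarith) (by linarith)
  have h₂ : 0 ≤ sin s := sin_nonneg_of_nonneg_of_le_pi hs₀ (by linarith)
  rcases hsθ.lt_or_eq with hlt | rfl
  · have : 0 < sin (θ - s) := sin_pos_of_pos_of_lt_pi (by linarith) (by linarith)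
    positivity
  · have : 0 < sin s := sin_pos_of_pos_of_lt_pi hθ₀ hθ
    positivity

theorem geodesic_densities_probability_general
    {M : Type*} [MeasurableSpace M] (lam : Measure M)
    (p p₁ : M → ℝ)
    (hp0 : ∀ x, 0 < p x) (hp₁0 : ∀ x, 0 < p₁ x)
    (hpint : ∫ x, p x ∂lam = 1) (hp₁int : ∫ x, p₁ x ∂lam = 1)
    (hL2p : MemLp (fun x => Real.sqrt (p x)) 2 lam)
    (hL2p₁ : MemLp (fun x => Real.sqrt (p₁ x)) 2 lam)
    (C : ℝ) (hC : C = ∫ x, Real.sqrt (p x * p₁ x) ∂lam)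
    (hC0 : 0 < C) (hC1 : C < 1)
    (l : ℝ) (hl : l = 2 * Real.arccos C)
    (pt : ℝ → M → ℝ)
    (hpt : ∀ t x, pt t x = ((Real.sin ((l - t) / 2) * Real.sqrt (p x)
      + Real.sin (t / 2) * Real.sqrt (p₁ x)) / Real.sin (l / 2))^2) :
    (∀ t, 0 ≤ t → t ≤ l → ∫ x, pt t x ∂lam = 1) ∧
    (∀ t, 0 ≤ t → t ≤ l → ∀ x, 0 < pt t x) ∧
    (∀ x, pt 0 x = p x) ∧ (∀ x, pt l x = p₁ x) := by
  set θ := arccos C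
  have hlθ : l / 2 = θ := by rw [hl]; ring
  have hθ₀ : 0 < θ := arccos_pos.2 hC1
  have hθπ : θ < π := arccos_lt_pi.2 (by linarith)
  have hsinθ : 0 < sin θ := sin_pos_of_pos_of_lt_pi hθ₀ hθπ
  have hcosθ : cos θ = C := cos_arccos (by linarith) hC1.le
  have hsplit (t : ℝ) : (l - t) / 2 = θ - t / 2 := by rw [← hlθ]; ring
  refine ⟨fun t _ _ => ?_, fun t ht₀ htl x => ?_, fun x => ?_, fun x => ?_⟩
  · have hsqrt_mul : ∫ x, sqrt (p x) * sqrt (p₁ x) ∂lam = C := by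
      rw [hC]; congr with x; exact (sqrt_mul (hp0 x).le _).symm
    have hsin := sin_sq_add_two_mul_sin_mul_sin_mul_cos_add_add_sin_sq (θ - t / 2) (t / 2)
    rw [sub_add_cancel, hcosθ] at hsin
    simp_rw [hpt, div_pow, hsplit, hlθ]
    rw [integral_div, integral_add_mul_sq_of_memLp hL2p hL2p₁, hsqrt_mul]
    simp_rw [sq_sqrt (hp0 _).le, sq_sqrt (hp₁0 _).le]
    rw [hpint, hp₁int, mul_one, mul_one, hsin, div_self (by positivity)]
  · rw [hpt, hsplit, hlθ]
    exact pow_pos (div_pos (sin_sub_mul_add_sin_mul_pos hθ₀ hθπ (by linarith) (by linarith)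
      (sqrt_pos.2 (hp0 x)) (sqrt_pos.2 (hp₁0 x))) hsinθ) 2
  · rw [hpt, hsplit, hlθ]
    simp [hsinθ.ne', sq_sqrt (hp0 x).le]
  · rw [hpt, hlθ]
    simp [hsinθ.ne', sq_sqrt (hp₁0 x).le]

/-- the geodesic densities
`p_t = ((sin((l−t)/2)√p + sin(t/2)√p₁)/sin(l/2))²` are probability densities,
positive, with `p_0 = p` and `p_l = p₁`. -/
theorem geodesic_densities_probability
    {M : Type*} [MeasurableSpace M] (lam : Measure M) [IsProbabilityMeasure lam]
    (p p₁ : M → ℝ) (hp : Measurable p) (hp₁ : Measurable p₁)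
    (hp0 : ∀ x, 0 < p x) (hp₁0 : ∀ x, 0 < p₁ x)
    (hpint : ∫ x, p x ∂lam = 1) (hp₁int : ∫ x, p₁ x ∂lam = 1)
    (hL2p : MemLp (fun x => Real.sqrt (p x)) 2 lam)
    (hL2p₁ : MemLp (fun x => Real.sqrt (p₁ x)) 2 lam)
    (C : ℝ) (hC : C = ∫ x, Real.sqrt (p x * p₁ x) ∂lam)
    (hC0 : 0 < C) (hC1 : C < 1)
    (l : ℝ) (hl : l = 2 * Real.arccos C)
    (pt : ℝ → M → ℝ)
    (hpt : ∀ t x, pt t x = ((Real.sin ((l - t) / 2) * Real.sqrt (p x)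
      + Real.sin (t / 2) * Real.sqrt (p₁ x)) / Real.sin (l / 2))^2) :
    (∀ t, 0 ≤ t → t ≤ l → ∫ x, pt t x ∂lam = 1) ∧
    (∀ t, 0 ≤ t → t ≤ l → ∀ x, 0 < pt t x) ∧
    (∀ x, pt 0 x = p x) ∧ (∀ x, pt l x = p₁ x) :=
  geodesic_densities_probability_general lam p p₁ hp0 hp₁0 hpint hp₁int hL2p hL2p₁ C hC hC0 hC1 l hl
    pt hpt
end

section
/- Let p, p', p₁, p₁' be positive probability densities on (M, λ) with square roots in L², and let P = √(p·p₁)/∫√(p·p₁)dλ and P' = √(p'·p₁')/∫√(p'·p₁')dλ be the normalized geometric mean densities (assume both Hellinger integrals are positive). Then ‖√P − √P'‖_{L²}² ≤ (2/∫√(p·p₁)dλ)·(‖√p − √p'‖_{L²} + ‖√p₁ − √p₁'‖_{L²}). In particular the normalized geometric mean is continuous in the Hellinger topology. -/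
open MeasureTheory Real

/-!
Write `f = (p p₁)^{1/4}` and `g = (p' p₁')^{1/4}`, so that `√P` and `√P'` are `f` and `g`
normalized in `L²`. Since `⟪f, g⟫ ≥ 0`, normalizing costs at most a factor `2 / ‖f‖²` on the
squared distance. Pointwise `(f - g)² ≤ |√p √p₁ - √p' √p₁'| ≤ √p₁ |√p - √p'| + √p' |√p₁ - √p₁'|`,
and Cauchy–Schwarz with `‖√p₁‖ = ‖√p'‖ = 1` bounds the integral of the right side by the sum of
the two Hellinger distances.
-/

theorem sq_sqrt_sub_sqrt_le_abs_sub (x y : ℝ) : (√x - √y) ^ 2 ≤ |x - y| := by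
  wlog hyx : y ≤ x generalizing x y
  · simpa only [sub_sq_comm, abs_sub_comm] using this y x (le_of_not_ge hyx)
  rw [abs_of_nonneg (sub_nonneg.2 hyx)]
  rcases le_total 0 y with hy | hy
  · nlinarith [sq_sqrt hy, sq_sqrt (hy.trans hyx), sqrt_le_sqrt hyx, sqrt_nonneg y]
  · rw [sqrt_eq_zero'.2 hy, sub_zero]
    rcases le_total 0 x with hx | hx
    · rw [sq_sqrt hx]; linarith
    · rw [sqrt_eq_zero'.2 hx]; linarith

theorem sq_sqrt_mul_sub_sqrt_mul_le (u v u' v' : ℝ) :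
    (√(u * v) - √(u' * v')) ^ 2 ≤ |v| * |u - u'| + |u'| * |v - v'| :=
  calc (√(u * v) - √(u' * v')) ^ 2 ≤ |u * v - u' * v'| := sq_sqrt_sub_sqrt_le_abs_sub _ _
    _ = |v * (u - u') + u' * (v - v')| := by ring_nf
    _ ≤ |v| * |u - u'| + |u'| * |v - v'| := by
      simpa only [abs_mul] using abs_add_le (v * (u - u')) (u' * (v - v'))

/-- With `A = ‖f‖²`, `B = ‖g‖²` and `c = ⟪f, g⟫`, this reads
`‖f / ‖f‖ - g / ‖g‖‖² ≤ 2 ‖f - g‖² / ‖f‖²`. -/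
theorem two_sub_two_mul_div_sqrt_mul_sqrt_le {A B c : ℝ} (hA : 0 < A) (hB : 0 < B) (hc : 0 ≤ c)
    (hcAB : 2 * c ≤ A + B) : 2 - 2 * c / (√A * √B) ≤ 2 / A * (A + B - 2 * c) := by
  obtain ⟨a, ha, rfl⟩ : ∃ a, 0 < a ∧ a ^ 2 = A := ⟨√A, sqrt_pos.2 hA, sq_sqrt hA.le⟩
  obtain ⟨b, hb, rfl⟩ : ∃ b, 0 < b ∧ b ^ 2 = B := ⟨√B, sqrt_pos.2 hB, sq_sqrt hB.le⟩
  have hcubic : c * (2 * b - a) ≤ b ^ 3 := by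
    rcases le_total a (2 * b) with h | h
    · nlinarith [mul_le_mul_of_nonneg_right hcAB (sub_nonneg.2 h),
        mul_nonneg ha.le (sq_nonneg (a - b))]
    · nlinarith [mul_nonpos_of_nonneg_of_nonpos hc (sub_nonpos.2 h), pow_pos hb 3]
  rw [sqrt_sq ha.le, sqrt_sq hb.le, sub_le_iff_le_add, div_mul_eq_mul_div,
    div_add_div _ _ (by positivity) (by positivity), le_div_iff₀ (by positivity)]
  nlinarith [mul_le_mul_of_nonneg_left hcubic ha.le]

namespace MeasureTheory

variable {α : Type*} [MeasurableSpace α] {μ : Measure α}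

theorem Integrable.memLp_two_sqrt {h : α → ℝ} (hh : Integrable h μ) (hh₀ : 0 ≤ᵐ[μ] h) :
    MemLp (fun x => √(h x)) 2 μ :=
  (memLp_two_iff_integrable_sq hh.aemeasurable.sqrt.aestronglyMeasurable).2 <|
    hh.congr <| hh₀.mono fun _ hx => (sq_sqrt hx).symm

theorem integral_abs_mul_abs_le {f g : α → ℝ} (hf : MemLp f 2 μ) (hg : MemLp g 2 μ) :
    ∫ x, |f x| * |g x| ∂μ ≤ √(∫ x, f x ^ 2 ∂μ) * √(∫ x, g x ^ 2 ∂μ) := by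
  have h := integral_mul_norm_le_Lp_mul_Lq (μ := μ) HolderConjugate.two_two
    (by simpa using hf) (by simpa using hg)
  simpa only [Real.norm_eq_abs, rpow_two, sq_abs, ← sqrt_eq_rpow] using h

theorem integral_sub_sq {f g : α → ℝ} (hf : MemLp f 2 μ) (hg : MemLp g 2 μ) :
    ∫ x, (f x - g x) ^ 2 ∂μ = ∫ x, f x ^ 2 ∂μ + ∫ x, g x ^ 2 ∂μ - 2 * ∫ x, f x * g x ∂μ := by
  have hfg : Integrable (fun x => f x * g x) μ := hf.integrable_mul hg
  simp_rw [sub_sq', mul_assoc]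
  rw [integral_sub (by exact hf.integrable_sq.add hg.integrable_sq) (hfg.const_mul 2),
    integral_add hf.integrable_sq hg.integrable_sq, integral_const_mul]

theorem integral_sq_sqrt_div_integral_sub_le {h k : α → ℝ} (hh : Integrable h μ)
    (hk : Integrable k μ) (hh₀ : 0 ≤ᵐ[μ] h) (hk₀ : 0 ≤ᵐ[μ] k) (hh_pos : 0 < ∫ x, h x ∂μ)
    (hk_pos : 0 < ∫ x, k x ∂μ) :
    ∫ x, (√(h x / ∫ y, h y ∂μ) - √(k x / ∫ y, k y ∂μ)) ^ 2 ∂μ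
      ≤ 2 / (∫ x, h x ∂μ) * ∫ x, (√(h x) - √(k x)) ^ 2 ∂μ := by
  set A := ∫ x, h x ∂μ
  set B := ∫ x, k x ∂μ
  set c := ∫ x, √(h x) * √(k x) ∂μ
  have hsh : MemLp (fun x => √(h x)) 2 μ := hh.memLp_two_sqrt hh₀
  have hsk : MemLp (fun x => √(k x)) 2 μ := hk.memLp_two_sqrt hk₀
  have hA : ∫ x, √(h x) ^ 2 ∂μ = A := integral_congr_ae <| hh₀.mono fun _ hx => sq_sqrt hx
  have hB : ∫ x, √(k x) ^ 2 ∂μ = B := integral_congr_ae <| hk₀.mono fun _ hx => sq_sqrt hx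
  have hnormalized : ∫ x, (√(h x / A) - √(k x / B)) ^ 2 ∂μ = 2 - 2 * c / (√A * √B) := by
    simp_rw [sqrt_div' _ hh_pos.le, sqrt_div' _ hk_pos.le]
    rw [integral_sub_sq (by simpa only [div_eq_mul_inv] using hsh.mul_const (√A)⁻¹)
      (by simpa only [div_eq_mul_inv] using hsk.mul_const (√B)⁻¹)]
    simp_rw [div_pow, div_mul_div_comm, integral_div, hA, hB, sq_sqrt hh_pos.le,
      sq_sqrt hk_pos.le, div_self hh_pos.ne', div_self hk_pos.ne']
    ring
  have hdist : ∫ x, (√(h x) - √(k x)) ^ 2 ∂μ = A + B - 2 * c := by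
    rw [integral_sub_sq hsh hsk, hA, hB]
  have hc : 0 ≤ c := integral_nonneg fun x => mul_nonneg (sqrt_nonneg _) (sqrt_nonneg _)
  have hdist_nonneg : 0 ≤ ∫ x, (√(h x) - √(k x)) ^ 2 ∂μ := integral_nonneg fun x => sq_nonneg _
  rw [hnormalized, hdist]
  exact two_sub_two_mul_div_sqrt_mul_sqrt_le hh_pos hk_pos hc (by linarith)

theorem integral_sq_sqrt_mul_sub_sqrt_mul_le {u v u' v' : α → ℝ} (hu : MemLp u 2 μ)
    (hv : MemLp v 2 μ) (hu' : MemLp u' 2 μ) (hv' : MemLp v' 2 μ) :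
    ∫ x, (√(u x * v x) - √(u' x * v' x)) ^ 2 ∂μ
      ≤ √(∫ x, v x ^ 2 ∂μ) * √(∫ x, (u x - u' x) ^ 2 ∂μ)
        + √(∫ x, u' x ^ 2 ∂μ) * √(∫ x, (v x - v' x) ^ 2 ∂μ) := by
  have hint₁ : Integrable (fun x => |v x| * |u x - u' x|) μ :=
    hv.abs.integrable_mul (hu.sub hu').abs
  have hint₂ : Integrable (fun x => |u' x| * |v x - v' x|) μ :=
    hu'.abs.integrable_mul (hv.sub hv').abs
  calc ∫ x, (√(u x * v x) - √(u' x * v' x)) ^ 2 ∂μ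
      ≤ ∫ x, (|v x| * |u x - u' x| + |u' x| * |v x - v' x|) ∂μ :=
        integral_mono_of_nonneg (ae_of_all _ fun _ => sq_nonneg _) (hint₁.add hint₂)
          (ae_of_all _ fun x => sq_sqrt_mul_sub_sqrt_mul_le (u x) (v x) (u' x) (v' x))
    _ = ∫ x, |v x| * |u x - u' x| ∂μ + ∫ x, |u' x| * |v x - v' x| ∂μ := integral_add hint₁ hint₂
    _ ≤ _ := add_le_add (integral_abs_mul_abs_le hv (hu.sub hu'))
        (integral_abs_mul_abs_le hu' (hv.sub hv'))

end MeasureTheory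

theorem normalized_geometric_mean_continuity_general
    {M : Type*} [MeasurableSpace M] (lam : Measure M)
    (p p' p₁ p₁' : M → ℝ)
    (hp0 : ∀ x, 0 < p x) (hp'0 : ∀ x, 0 < p' x)
    (hp₁0 : ∀ x, 0 < p₁ x)
    (hp'int : ∫ x, p' x ∂lam = 1)
    (hp₁int : ∫ x, p₁ x ∂lam = 1)
    (hL2p : MemLp (fun x => Real.sqrt (p x)) 2 lam)
    (hL2p' : MemLp (fun x => Real.sqrt (p' x)) 2 lam)
    (hL2p₁ : MemLp (fun x => Real.sqrt (p₁ x)) 2 lam)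
    (hL2p₁' : MemLp (fun x => Real.sqrt (p₁' x)) 2 lam)
    (hH : 0 < ∫ x, Real.sqrt (p x * p₁ x) ∂lam)
    (hH' : 0 < ∫ x, Real.sqrt (p' x * p₁' x) ∂lam)
    (P P' : M → ℝ)
    (hP : ∀ x, P x = Real.sqrt (p x * p₁ x) / ∫ y, Real.sqrt (p y * p₁ y) ∂lam)
    (hP' : ∀ x, P' x = Real.sqrt (p' x * p₁' x) / ∫ y, Real.sqrt (p' y * p₁' y) ∂lam) :
    ∫ x, (Real.sqrt (P x) - Real.sqrt (P' x))^2 ∂lam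
      ≤ (2 / ∫ x, Real.sqrt (p x * p₁ x) ∂lam) *
          (Real.sqrt (∫ x, (Real.sqrt (p x) - Real.sqrt (p' x))^2 ∂lam)
            + Real.sqrt (∫ x, (Real.sqrt (p₁ x) - Real.sqrt (p₁' x))^2 ∂lam)) := by
  have hsqrt_mul : ∀ x, √(p x * p₁ x) = √(p x) * √(p₁ x) := fun x => sqrt_mul (hp0 x).le _
  have hsqrt_mul' : ∀ x, √(p' x * p₁' x) = √(p' x) * √(p₁' x) := fun x => sqrt_mul (hp'0 x).le _
  have hsq₁ : ∀ x, √(p₁ x) ^ 2 = p₁ x := fun x => sq_sqrt (hp₁0 x).le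
  have hsq' : ∀ x, √(p' x) ^ 2 = p' x := fun x => sq_sqrt (hp'0 x).le
  have hint : Integrable (fun x => √(p x * p₁ x)) lam := by
    simp_rw [hsqrt_mul]
    exact hL2p.integrable_mul hL2p₁
  have hint' : Integrable (fun x => √(p' x * p₁' x)) lam := by
    simp_rw [hsqrt_mul']
    exact hL2p'.integrable_mul hL2p₁'
  simp only [hP, hP']
  calc _ ≤ 2 / (∫ x, √(p x * p₁ x) ∂lam) * ∫ x, (√√(p x * p₁ x) - √√(p' x * p₁' x)) ^ 2 ∂lam :=
        integral_sq_sqrt_div_integral_sub_le hint hint' (ae_of_all _ fun _ => sqrt_nonneg _)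
          (ae_of_all _ fun _ => sqrt_nonneg _) hH hH'
    _ ≤ _ := by
        gcongr
        simpa only [hsqrt_mul, hsqrt_mul', hsq₁, hsq', hp₁int, hp'int, sqrt_one, one_mul] using
          integral_sq_sqrt_mul_sub_sqrt_mul_le hL2p hL2p₁ hL2p' hL2p₁'

/-- continuity estimate for the normalized geometric mean:
`‖√P − √P'‖²_{L²} ≤ (2/∫√(p p₁))(‖√p − √p'‖_{L²} + ‖√p₁ − √p₁'‖_{L²})`. -/
theorem normalized_geometric_mean_continuity
    {M : Type*} [MeasurableSpace M] (lam : Measure M) [IsProbabilityMeasure lam]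
    (p p' p₁ p₁' : M → ℝ)
    (hp : Measurable p) (hp' : Measurable p') (hp₁ : Measurable p₁) (hp₁' : Measurable p₁')
    (hp0 : ∀ x, 0 < p x) (hp'0 : ∀ x, 0 < p' x)
    (hp₁0 : ∀ x, 0 < p₁ x) (hp₁'0 : ∀ x, 0 < p₁' x)
    (hpint : ∫ x, p x ∂lam = 1) (hp'int : ∫ x, p' x ∂lam = 1)
    (hp₁int : ∫ x, p₁ x ∂lam = 1) (hp₁'int : ∫ x, p₁' x ∂lam = 1)
    (hL2p : MemLp (fun x => Real.sqrt (p x)) 2 lam)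
    (hL2p' : MemLp (fun x => Real.sqrt (p' x)) 2 lam)
    (hL2p₁ : MemLp (fun x => Real.sqrt (p₁ x)) 2 lam)
    (hL2p₁' : MemLp (fun x => Real.sqrt (p₁' x)) 2 lam)
    (hH : 0 < ∫ x, Real.sqrt (p x * p₁ x) ∂lam)
    (hH' : 0 < ∫ x, Real.sqrt (p' x * p₁' x) ∂lam)
    (P P' : M → ℝ)
    (hP : ∀ x, P x = Real.sqrt (p x * p₁ x) / ∫ y, Real.sqrt (p y * p₁ y) ∂lam)
    (hP' : ∀ x, P' x = Real.sqrt (p' x * p₁' x) / ∫ y, Real.sqrt (p' y * p₁' y) ∂lam) :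
    ∫ x, (Real.sqrt (P x) - Real.sqrt (P' x))^2 ∂lam
      ≤ (2 / ∫ x, Real.sqrt (p x * p₁ x) ∂lam) *
          (Real.sqrt (∫ x, (Real.sqrt (p x) - Real.sqrt (p' x))^2 ∂lam)
            + Real.sqrt (∫ x, (Real.sqrt (p₁ x) - Real.sqrt (p₁' x))^2 ∂lam)) :=
  normalized_geometric_mean_continuity_general lam p p' p₁ p₁' hp0 hp'0 hp₁0 hp'int hp₁int hL2p
    hL2p' hL2p₁ hL2p₁' hH hH' P P' hP hP'
end
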